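/- (Second family, Case λ₂ = λ₃ = 0, λ₁ ≠ 0) Under the ruled hypothesis Q = −uP, u_y + u·u_x = 0, suppose Δx = λ₁·x, Δy = λ₂·y, Δf = λ₃·f on D for real constants with λ₂ = λ₃ = 0, λ₁ ≠ 0, and suppose P is nowhere zero on D. Then u·H₁ = −W, i.e. u·(f_xx + f_yy) = −(1 + P²(1 + u²)) on D (in particular u is nowhere zero), and moreover −P(1 + u²)/(uW²) = λ₁·x and 2/(uW²) = λ₁·xy on D. -/

import Mathlib

noncomputable section

/-- Partial derivative with respect to the first (x) variable. -/
def pdx (f : ℝ × ℝ → ℝ) : ℝ × ℝ → ℝ := fun p => fderiv ℝ f p (1, 0)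

/-- Partial derivative with respect to the second (y) variable. -/
def pdy (f : ℝ × ℝ → ℝ) : ℝ × ℝ → ℝ := fun p => fderiv ℝ f p (0, 1)

/-- `P = f_x + y/2`. -/
def Pf (f : ℝ × ℝ → ℝ) : ℝ × ℝ → ℝ := fun p => pdx f p + p.2 / 2

/-- `Q = f_y - x/2`. -/
def Qf (f : ℝ × ℝ → ℝ) : ℝ × ℝ → ℝ := fun p => pdy f p - p.1 / 2

/-- First fundamental form coefficient `E = 1 + P²`. -/
def Ef (f : ℝ × ℝ → ℝ) : ℝ × ℝ → ℝ := fun p => 1 + Pf f p ^ 2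

/-- First fundamental form coefficient `F = P·Q`. -/
def Ff (f : ℝ × ℝ → ℝ) : ℝ × ℝ → ℝ := fun p => Pf f p * Qf f p

/-- First fundamental form coefficient `G = 1 + Q²`. -/
def Gf (f : ℝ × ℝ → ℝ) : ℝ × ℝ → ℝ := fun p => 1 + Qf f p ^ 2

/-- `W = √(EG − F²) = √(1 + P² + Q²)`. -/
def Wf (f : ℝ × ℝ → ℝ) : ℝ × ℝ → ℝ := fun p => Real.sqrt (1 + Pf f p ^ 2 + Qf f p ^ 2)

/-- Second fundamental form coefficient `L = (f_xx + PQ)/W`. -/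
def Lf (f : ℝ × ℝ → ℝ) : ℝ × ℝ → ℝ := fun p => (pdx (pdx f) p + Pf f p * Qf f p) / Wf f p

/-- Second fundamental form coefficient `M = (f_xy + (Q² − P²)/2)/W`. -/
def Mf (f : ℝ × ℝ → ℝ) : ℝ × ℝ → ℝ :=
  fun p => (pdx (pdy f) p + (Qf f p ^ 2 - Pf f p ^ 2) / 2) / Wf f p

/-- Second fundamental form coefficient `N = (f_yy − PQ)/W`. -/
def Nf (f : ℝ × ℝ → ℝ) : ℝ × ℝ → ℝ := fun p => (pdy (pdy f) p - Pf f p * Qf f p) / Wf f p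

/-- Mean curvature `H = (EN − 2FM + GL)/(2W²)`. -/
def Hf (f : ℝ × ℝ → ℝ) : ℝ × ℝ → ℝ :=
  fun p => (Ef f p * Nf f p - 2 * Ff f p * Mf f p + Gf f p * Lf f p) / (2 * Wf f p ^ 2)

/-- The Laplace–Beltrami operator of the graph of `f`, with the sign convention
`Δφ = −(1/W)[∂_x((G φ_x − F φ_y)/W) + ∂_y((−F φ_x + E φ_y)/W)]`. -/
def lapS (f φ : ℝ × ℝ → ℝ) : ℝ × ℝ → ℝ := fun p =>
  -(1 / Wf f p) *
    (pdx (fun q => (Gf f q * pdx φ q - Ff f q * pdy φ q) / Wf f q) p +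
     pdy (fun q => (-(Ff f q) * pdx φ q + Ef f q * pdy φ q) / Wf f q) p)

/-- Mean curvature in the form `H = (f_xx + f_yy)/(2W³)`. -/
def Hm (f : ℝ × ℝ → ℝ) : ℝ × ℝ → ℝ :=
  fun p => (pdx (pdx f) p + pdy (pdy f) p) / (2 * Wf f p ^ 3)

/-- `H₁ = (f_xx + f_yy)/W`. -/
def H1f (f : ℝ × ℝ → ℝ) : ℝ × ℝ → ℝ :=
  fun p => (pdx (pdx f) p + pdy (pdy f) p) / Wf f p

/-! In coordinates the Laplace–Beltrami operator of the graph gives `Δx = Q/W² + 2PH/W`,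
`Δy = −P/W² + 2QH/W` and `Δf = −2H/W − (y/2)Δx + (x/2)Δy`, where `H` is the mean curvature.
Differentiating `uP + Q = 0` along the ruling direction `(u, 1)` and using the Burgers equation
gives `u² f_xx + 2u f_xy + f_yy = 0`, which turns `H` into `(f_xx + f_yy)/(2W³)`. Since `Q = −uP`
and `P ≠ 0`, the equation `Δy = 0` becomes `2uHW = −1`; the claimed identities then follow
algebraically from `Δx = λ₁x` and `Δf = 0`. -/

open Filter Topology

def HasPartials (g : ℝ × ℝ → ℝ) (gx gy : ℝ) (p : ℝ × ℝ) : Prop :=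
  ∃ L : ℝ × ℝ →L[ℝ] ℝ, HasFDerivAt g L p ∧ L (1, 0) = gx ∧ L (0, 1) = gy

namespace HasPartials

variable {g h : ℝ × ℝ → ℝ} {gx gy hx hy : ℝ} {p : ℝ × ℝ}

theorem pdx_eq (hg : HasPartials g gx gy p) : pdx g p = gx := by
  obtain ⟨L, hL, hx, -⟩ := hg
  rw [pdx, hL.fderiv, hx]

theorem pdy_eq (hg : HasPartials g gx gy p) : pdy g p = gy := by
  obtain ⟨L, hL, -, hy⟩ := hg
  rw [pdy, hL.fderiv, hy]

theorem of_differentiableAt (hg : DifferentiableAt ℝ g p) : HasPartials g (pdx g p) (pdy g p) p :=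
  ⟨fderiv ℝ g p, hg.hasFDerivAt, rfl, rfl⟩

theorem congr_of_eventuallyEq (hg : HasPartials g gx gy p) (he : h =ᶠ[𝓝 p] g) :
    HasPartials h gx gy p := by
  obtain ⟨L, hL, hx, hy⟩ := hg
  exact ⟨L, hL.congr_of_eventuallyEq he, hx, hy⟩

theorem const (c : ℝ) (p : ℝ × ℝ) : HasPartials (fun _ => c) 0 0 p :=
  ⟨0, hasFDerivAt_const _ _, rfl, rfl⟩

theorem fst (p : ℝ × ℝ) : HasPartials (fun q => q.1) 1 0 p :=
  ⟨ContinuousLinearMap.fst ℝ ℝ ℝ, hasFDerivAt_fst, rfl, rfl⟩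

theorem snd (p : ℝ × ℝ) : HasPartials (fun q => q.2) 0 1 p :=
  ⟨ContinuousLinearMap.snd ℝ ℝ ℝ, hasFDerivAt_snd, rfl, rfl⟩

theorem add (hg : HasPartials g gx gy p) (hh : HasPartials h hx hy p) :
    HasPartials (fun q => g q + h q) (gx + hx) (gy + hy) p := by
  obtain ⟨L, hL, hLx, hLy⟩ := hg
  obtain ⟨M, hM, hMx, hMy⟩ := hh
  exact ⟨L + M, hL.add hM, by simp [hLx, hMx], by simp [hLy, hMy]⟩

theorem neg (hg : HasPartials g gx gy p) : HasPartials (fun q => -g q) (-gx) (-gy) p := by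
  obtain ⟨L, hL, hLx, hLy⟩ := hg
  exact ⟨-L, hL.neg, by simp [hLx], by simp [hLy]⟩

theorem sub (hg : HasPartials g gx gy p) (hh : HasPartials h hx hy p) :
    HasPartials (fun q => g q - h q) (gx - hx) (gy - hy) p := by
  obtain ⟨L, hL, hLx, hLy⟩ := hg
  obtain ⟨M, hM, hMx, hMy⟩ := hh
  exact ⟨L - M, hL.sub hM, by simp [hLx, hMx], by simp [hLy, hMy]⟩

theorem mul (hg : HasPartials g gx gy p) (hh : HasPartials h hx hy p) :
    HasPartials (fun q => g q * h q) (gx * h p + g p * hx) (gy * h p + g p * hy) p := by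
  obtain ⟨L, hL, hLx, hLy⟩ := hg
  obtain ⟨M, hM, hMx, hMy⟩ := hh
  refine ⟨g p • M + h p • L, hL.mul hM, ?_, ?_⟩ <;> simp [hLx, hMx, hLy, hMy] <;> ring

theorem sq (hg : HasPartials g gx gy p) :
    HasPartials (fun q => g q ^ 2) (2 * g p * gx) (2 * g p * gy) p := by
  obtain ⟨L, hL, hLx, hLy⟩ := hg
  refine ⟨_, hL.pow 2, ?_, ?_⟩ <;> simp [hLx, hLy]

theorem inv (hg : HasPartials g gx gy p) (h0 : g p ≠ 0) :
    HasPartials (fun q => (g q)⁻¹) (-(gx / g p ^ 2)) (-(gy / g p ^ 2)) p := by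
  obtain ⟨L, hL, hLx, hLy⟩ := hg
  refine ⟨_, (hasDerivAt_inv h0).comp_hasFDerivAt p hL, ?_, ?_⟩ <;>
    simp [hLx, hLy] <;> field_simp

theorem div (hg : HasPartials g gx gy p) (hh : HasPartials h hx hy p) (h0 : h p ≠ 0) :
    HasPartials (fun q => g q / h q) (gx * (h p)⁻¹ + g p * -(hx / h p ^ 2))
      (gy * (h p)⁻¹ + g p * -(hy / h p ^ 2)) p := by
  simpa only [div_eq_mul_inv] using hg.mul (hh.inv h0)

theorem sqrt (hg : HasPartials g gx gy p) (h0 : g p ≠ 0) :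
    HasPartials (fun q => Real.sqrt (g q)) (gx / (2 * Real.sqrt (g p)))
      (gy / (2 * Real.sqrt (g p))) p := by
  obtain ⟨L, hL, hLx, hLy⟩ := hg
  refine ⟨_, hL.sqrt h0, ?_, ?_⟩ <;> simp [hLx, hLy] <;> ring

end HasPartials

theorem Wf_pos (f : ℝ × ℝ → ℝ) (p : ℝ × ℝ) : 0 < Wf f p :=
  Real.sqrt_pos.mpr (by positivity)

theorem Wf_sq (f : ℝ × ℝ → ℝ) (p : ℝ × ℝ) : Wf f p ^ 2 = 1 + Pf f p ^ 2 + Qf f p ^ 2 :=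
  Real.sq_sqrt (by positivity)

section Graph

variable {f : ℝ × ℝ → ℝ} {p : ℝ × ℝ}

theorem pdx_fst : pdx (fun q : ℝ × ℝ => q.1) = fun _ => 1 :=
  funext fun q => (HasPartials.fst q).pdx_eq

theorem pdy_fst : pdy (fun q : ℝ × ℝ => q.1) = fun _ => 0 :=
  funext fun q => (HasPartials.fst q).pdy_eq

theorem pdx_snd : pdx (fun q : ℝ × ℝ => q.2) = fun _ => 0 :=
  funext fun q => (HasPartials.snd q).pdx_eq

theorem pdy_snd : pdy (fun q : ℝ × ℝ => q.2) = fun _ => 1 :=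
  funext fun q => (HasPartials.snd q).pdy_eq

theorem differentiableAt_fderiv (hf : ContDiffAt ℝ 2 f p) : DifferentiableAt ℝ (fderiv ℝ f) p :=
  (hf.fderiv_right (m := 1) (by norm_num)).differentiableAt (by norm_num)

theorem fderiv_fderiv_apply (hf : ContDiffAt ℝ 2 f p) (v w : ℝ × ℝ) :
    fderiv ℝ (fun q => fderiv ℝ f q v) p w = fderiv ℝ (fderiv ℝ f) p w v := by
  rw [fderiv_clm_apply (differentiableAt_fderiv hf) (differentiableAt_const v)]
  simp

theorem pdy_pdx (hf : ContDiffAt ℝ 2 f p) : pdy (pdx f) p = pdx (pdy f) p := by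
  change fderiv ℝ (fun q => fderiv ℝ f q (1, 0)) p (0, 1) =
    fderiv ℝ (fun q => fderiv ℝ f q (0, 1)) p (1, 0)
  rw [fderiv_fderiv_apply hf, fderiv_fderiv_apply hf]
  exact hf.isSymmSndFDerivAt (by simp) (0, 1) (1, 0)

theorem differentiableAt_pdx (hf : ContDiffAt ℝ 2 f p) : DifferentiableAt ℝ (pdx f) p :=
  (differentiableAt_fderiv hf).clm_apply (differentiableAt_const _)

theorem differentiableAt_pdy (hf : ContDiffAt ℝ 2 f p) : DifferentiableAt ℝ (pdy f) p :=
  (differentiableAt_fderiv hf).clm_apply (differentiableAt_const _)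

theorem hasPartials_pdx (hf : ContDiffAt ℝ 2 f p) :
    HasPartials (pdx f) (pdx (pdx f) p) (pdx (pdy f) p) p :=
  pdy_pdx hf ▸ .of_differentiableAt (differentiableAt_pdx hf)

theorem hasPartials_pdy (hf : ContDiffAt ℝ 2 f p) :
    HasPartials (pdy f) (pdx (pdy f) p) (pdy (pdy f) p) p :=
  .of_differentiableAt (differentiableAt_pdy hf)

theorem hasPartials_Pf (hf : ContDiffAt ℝ 2 f p) :
    HasPartials (Pf f) (pdx (pdx f) p) (pdx (pdy f) p + 1 / 2) p := by
  convert (hasPartials_pdx hf).add ((HasPartials.snd p).div (.const 2 p) two_ne_zero) using 1 <;>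
    first | rfl | norm_num

theorem hasPartials_Qf (hf : ContDiffAt ℝ 2 f p) :
    HasPartials (Qf f) (pdx (pdy f) p - 1 / 2) (pdy (pdy f) p) p := by
  convert (hasPartials_pdy hf).sub ((HasPartials.fst p).div (.const 2 p) two_ne_zero) using 1 <;>
    first | rfl | norm_num

/-- The quotient rule for the flux `(Gφ_x − Fφ_y, −Fφ_x + Eφ_y)/W`, with `W W_x = P P_x + Q Q_x`
and `W W_y = P P_y + Q Q_y`. -/
theorem lapS_eq {φ : ℝ × ℝ → ℝ} {Px Py Qx Qy φxx φxy φyx φyy : ℝ}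
    (hP : HasPartials (Pf f) Px Py p) (hQ : HasPartials (Qf f) Qx Qy p)
    (hφx : HasPartials (pdx φ) φxx φxy p) (hφy : HasPartials (pdy φ) φyx φyy p) :
    lapS f φ p =
      -((2 * Qf f p * Qx * pdx φ p + Gf f p * φxx
            - (Px * Qf f p + Pf f p * Qx) * pdy φ p - Ff f p * φyx
            - (Py * Qf f p + Pf f p * Qy) * pdx φ p - Ff f p * φxy
            + 2 * Pf f p * Py * pdy φ p + Ef f p * φyy) * Wf f p ^ 2
          - (Gf f p * pdx φ p - Ff f p * pdy φ p) * (Pf f p * Px + Qf f p * Qx)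
          - (-Ff f p * pdx φ p + Ef f p * pdy φ p) * (Pf f p * Py + Qf f p * Qy))
        / (Wf f p ^ 2) ^ 2 := by
  have hW := (Wf_pos f p).ne'
  have hE : HasPartials (Ef f) _ _ p := (HasPartials.const 1 p).add hP.sq
  have hG : HasPartials (Gf f) _ _ p := (HasPartials.const 1 p).add hQ.sq
  have hF : HasPartials (Ff f) _ _ p := hP.mul hQ
  have hWf : HasPartials (Wf f) ((0 + 2 * Pf f p * Px + 2 * Qf f p * Qx) / (2 * Wf f p))
      ((0 + 2 * Pf f p * Py + 2 * Qf f p * Qy) / (2 * Wf f p)) p :=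
    (((HasPartials.const 1 p).add hP.sq).add hQ.sq).sqrt (by positivity)
  have hA := ((hG.mul hφx).sub (hF.mul hφy)).div hWf hW
  have hB := ((hF.neg.mul hφx).add (hE.mul hφy)).div hWf hW
  rw [lapS, hA.pdx_eq, hB.pdy_eq]
  simp only [Ef, Ff, Gf]
  field_simp
  ring

theorem two_mul_Hf_mul_Wf_pow_three (f : ℝ × ℝ → ℝ) (p : ℝ × ℝ) :
    2 * Hf f p * Wf f p ^ 3 =
      Gf f p * pdx (pdx f) p - 2 * Ff f p * pdx (pdy f) p + Ef f p * pdy (pdy f) p := by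
  have hW := (Wf_pos f p).ne'
  simp only [Hf, Lf, Mf, Nf, Ef, Ff, Gf]
  field_simp
  ring

theorem lapS_fst (hf : ContDiffAt ℝ 2 f p) :
    lapS f (fun q => q.1) p = Qf f p / Wf f p ^ 2 + 2 * Pf f p * Hf f p / Wf f p := by
  have hW := (Wf_pos f p).ne'
  calc lapS f (fun q => q.1) p
      = (Qf f p * Wf f p ^ 2 + Pf f p * (2 * Hf f p * Wf f p ^ 3)) / (Wf f p ^ 2) ^ 2 := by
        rw [lapS_eq (hasPartials_Pf hf) (hasPartials_Qf hf) (by rw [pdx_fst]; exact .const 1 p)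
          (by rw [pdy_fst]; exact .const 0 p), two_mul_Hf_mul_Wf_pow_three, pdx_fst, pdy_fst, Wf_sq]
        simp only [Ef, Ff, Gf]
        ring
    _ = Qf f p / Wf f p ^ 2 + 2 * Pf f p * Hf f p / Wf f p := by field_simp

theorem lapS_snd (hf : ContDiffAt ℝ 2 f p) :
    lapS f (fun q => q.2) p = -Pf f p / Wf f p ^ 2 + 2 * Qf f p * Hf f p / Wf f p := by
  have hW := (Wf_pos f p).ne'
  calc lapS f (fun q => q.2) p
      = (-Pf f p * Wf f p ^ 2 + Qf f p * (2 * Hf f p * Wf f p ^ 3)) / (Wf f p ^ 2) ^ 2 := by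
        rw [lapS_eq (hasPartials_Pf hf) (hasPartials_Qf hf) (by rw [pdx_snd]; exact .const 0 p)
          (by rw [pdy_snd]; exact .const 1 p), two_mul_Hf_mul_Wf_pow_three, pdx_snd, pdy_snd, Wf_sq]
        simp only [Ef, Ff, Gf]
        ring
    _ = -Pf f p / Wf f p ^ 2 + 2 * Qf f p * Hf f p / Wf f p := by field_simp

theorem lapS_self (hf : ContDiffAt ℝ 2 f p) :
    lapS f f p = -(2 * Hf f p) / Wf f p - p.2 / 2 * lapS f (fun q => q.1) p
      + p.1 / 2 * lapS f (fun q => q.2) p := by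
  have hW := (Wf_pos f p).ne'
  have hfx : pdx f p = Pf f p - p.2 / 2 := by rw [Pf]; ring
  have hfy : pdy f p = Qf f p + p.1 / 2 := by rw [Qf]; ring
  rw [lapS_fst hf, lapS_snd hf]
  calc lapS f f p
      = (-(2 * Hf f p * Wf f p ^ 3)
          - p.2 / 2 * (Qf f p * Wf f p ^ 2 + Pf f p * (2 * Hf f p * Wf f p ^ 3))
          + p.1 / 2 * (-Pf f p * Wf f p ^ 2 + Qf f p * (2 * Hf f p * Wf f p ^ 3)))
          / (Wf f p ^ 2) ^ 2 := by
        rw [lapS_eq (hasPartials_Pf hf) (hasPartials_Qf hf) (hasPartials_pdx hf)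
          (hasPartials_pdy hf), two_mul_Hf_mul_Wf_pow_three, hfx, hfy, Wf_sq]
        simp only [Ef, Ff, Gf]
        ring
    _ = _ := by field_simp

end Graph

section Ruled

variable {f u : ℝ × ℝ → ℝ} {p : ℝ × ℝ}

theorem second_deriv_along_ruling_eq_zero (hf : ContDiffAt ℝ 2 f p) (hu : DifferentiableAt ℝ u p)
    (hruled : ∀ᶠ q in 𝓝 p, Qf f q = -u q * Pf f q) (hburgers : pdy u p + u p * pdx u p = 0) :
    u p ^ 2 * pdx (pdx f) p + 2 * u p * pdx (pdy f) p + pdy (pdy f) p = 0 := by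
  have hQ := hasPartials_Qf hf
  have hQ' :=
    ((HasPartials.of_differentiableAt hu).neg.mul (hasPartials_Pf hf)).congr_of_eventuallyEq hruled
  have hx := hQ.pdx_eq.symm.trans hQ'.pdx_eq
  have hy := hQ.pdy_eq.symm.trans hQ'.pdy_eq
  linear_combination u p * hx + hy - Pf f p * hburgers

theorem Hf_eq_Hm_of_ruled (hf : ContDiffAt ℝ 2 f p) (hu : DifferentiableAt ℝ u p)
    (hruled : ∀ᶠ q in 𝓝 p, Qf f q = -u q * Pf f q) (hburgers : pdy u p + u p * pdx u p = 0) :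
    Hf f p = Hm f p := by
  have hW := (Wf_pos f p).ne'
  have hX : 2 * Hf f p * Wf f p ^ 3 = pdx (pdx f) p + pdy (pdy f) p := by
    rw [two_mul_Hf_mul_Wf_pow_three, Ef, Ff, Gf, hruled.self_of_nhds]
    linear_combination Pf f p ^ 2 * second_deriv_along_ruling_eq_zero hf hu hruled hburgers
  rw [Hm, ← hX]
  field_simp

theorem two_mul_Hf_mul_Wf_eq_neg_one (hf : ContDiffAt ℝ 2 f p)
    (hruled : Qf f p = -u p * Pf f p) (hP : Pf f p ≠ 0) (hy : lapS f (fun q => q.2) p = 0) :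
    2 * u p * Hf f p * Wf f p = -1 := by
  have hW := (Wf_pos f p).ne'
  have h : Pf f p * (1 + 2 * u p * Hf f p * Wf f p) = -Wf f p ^ 2 * lapS f (fun q => q.2) p := by
    rw [lapS_snd hf, hruled]
    field_simp
    ring
  rw [hy, mul_zero] at h
  linear_combination (mul_eq_zero.mp h).resolve_left hP

end Ruled

theorem finite_type_S2_case_l2_l3_zero_general
    (D : Set (ℝ × ℝ)) (hD : IsOpen D)
    (f : ℝ × ℝ → ℝ) (hf : ContDiffOn ℝ (⊤ : ℕ∞) f D)
    (u : ℝ × ℝ → ℝ) (hu : ContDiffOn ℝ (⊤ : ℕ∞) u D)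
    (hruled : ∀ p ∈ D, Qf f p = -(u p) * Pf f p)
    (hburgers : ∀ p ∈ D, pdy u p + u p * pdx u p = 0)
    (l1 l2 l3 : ℝ)
    (h1 : ∀ p ∈ D, lapS f (fun q => q.1) p = l1 * p.1)
    (h2 : ∀ p ∈ D, lapS f (fun q => q.2) p = l2 * p.2)
    (h3 : ∀ p ∈ D, lapS f f p = l3 * f p)
    (hl2 : l2 = 0) (hl3 : l3 = 0)
    (hP : ∀ p ∈ D, Pf f p ≠ 0) :
    ∀ p ∈ D,
      (u p * H1f f p = -(Wf f p)) ∧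
      (u p * (pdx (pdx f) p + pdy (pdy f) p) = -(1 + Pf f p ^ 2 * (1 + u p ^ 2))) ∧
      (u p ≠ 0) ∧
      (-(Pf f p * (1 + u p ^ 2)) / (u p * Wf f p ^ 2) = l1 * p.1) ∧
      (2 / (u p * Wf f p ^ 2) = l1 * (p.1 * p.2)) := by
  intro p hp
  have hnhds := hD.mem_nhds hp
  have hf2 : ContDiffAt ℝ 2 f p := (hf.contDiffAt hnhds).of_le (WithTop.coe_le_coe.mpr le_top)
  have hu1 : DifferentiableAt ℝ u p := (hu.contDiffAt hnhds).differentiableAt (by simp)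
  have hQ := hruled p hp
  have hH := Hf_eq_Hm_of_ruled hf2 hu1 (eventually_of_mem hnhds hruled) (hburgers p hp)
  have hHW := two_mul_Hf_mul_Wf_eq_neg_one hf2 hQ (hP p hp) (by rw [h2 p hp, hl2, zero_mul])
  have hu0 : u p ≠ 0 := by rintro h0; simp [h0] at hHW
  have hW := (Wf_pos f p).ne'
  have hW2 : Wf f p ^ 2 = 1 + Pf f p ^ 2 * (1 + u p ^ 2) := by rw [Wf_sq, hQ]; ring
  have hsum : u p * (pdx (pdx f) p + pdy (pdy f) p) = -Wf f p ^ 2 := by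
    rw [hH, Hm] at hHW
    field_simp at hHW
    linear_combination hHW
  refine ⟨?_, hsum.trans (by rw [hW2]), hu0, ?_, ?_⟩
  · rw [H1f, mul_div_assoc', hsum]
    field_simp
  · rw [← h1 p hp, lapS_fst hf2, hQ]
    field_simp
    linear_combination -Pf f p * hHW
  · have h0 := h3 p hp
    rw [lapS_self hf2, h1 p hp, h2 p hp, hl2, hl3] at h0
    field_simp at h0
    field_simp
    linear_combination 2 * hHW + u p * Wf f p * h0

/-- **Second family, case `λ₂ = λ₃ = 0`, `λ₁ ≠ 0`**: under the ruled hypothesis `Q = −uP`,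
`u_y + u·u_x = 0`, if `Δx = λ₁x`, `Δy = λ₂y`, `Δf = λ₃f` on `D` with `λ₂ = λ₃ = 0`, `λ₁ ≠ 0`,
and `P` nowhere zero on `D`, then `uH₁ = −W`, i.e. `u(f_xx + f_yy) = −(1 + P²(1 + u²))`
(in particular `u` is nowhere zero), and moreover `−P(1 + u²)/(uW²) = λ₁x` and
`2/(uW²) = λ₁xy` on `D`. -/
theorem finite_type_S2_case_l2_l3_zero
    (D : Set (ℝ × ℝ)) (hD : IsOpen D) (hDne : D.Nonempty)
    (f : ℝ × ℝ → ℝ) (hf : ContDiffOn ℝ (⊤ : ℕ∞) f D)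
    (u : ℝ × ℝ → ℝ) (hu : ContDiffOn ℝ (⊤ : ℕ∞) u D)
    (hruled : ∀ p ∈ D, Qf f p = -(u p) * Pf f p)
    (hburgers : ∀ p ∈ D, pdy u p + u p * pdx u p = 0)
    (l1 l2 l3 : ℝ)
    (h1 : ∀ p ∈ D, lapS f (fun q => q.1) p = l1 * p.1)
    (h2 : ∀ p ∈ D, lapS f (fun q => q.2) p = l2 * p.2)
    (h3 : ∀ p ∈ D, lapS f f p = l3 * f p)
    (hl2 : l2 = 0) (hl3 : l3 = 0) (hl1 : l1 ≠ 0)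
    (hP : ∀ p ∈ D, Pf f p ≠ 0) :
    ∀ p ∈ D,
      (u p * H1f f p = -(Wf f p)) ∧
      (u p * (pdx (pdx f) p + pdy (pdy f) p) = -(1 + Pf f p ^ 2 * (1 + u p ^ 2))) ∧
      (u p ≠ 0) ∧
      (-(Pf f p * (1 + u p ^ 2)) / (u p * Wf f p ^ 2) = l1 * p.1) ∧
      (2 / (u p * Wf f p ^ 2) = l1 * (p.1 * p.2)) :=
  finite_type_S2_case_l2_l3_zero_general D hD f hf u hu hruled hburgers l1 l2 l3 h1 h2 h3 hl2 hl3 hP
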